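/- For all n ≥ 0, the number of permutations of {1,...,n} avoiding the patterns 132, 2341, and 3241 that contain exactly one subsequence of type 123 (i.e., exactly one increasing subsequence of length 3) equals F_{n+2} - n - 1, where F_k is the k-th Fibonacci number. -/

import Mathlib

/-- A function `π : Fin n → Fin n` contains the pattern `p : Fin k → ℕ` if there is a
strictly increasing choice of indices whose images under `π` have the same pairwise
order relations as the entries of `p`. -/
def Contains {n k : ℕ} (π : Fin n → Fin n) (p : Fin k → ℕ) : Prop :=
  ∃ f : Fin k → Fin n, StrictMono f ∧ ∀ i j, p i < p j ↔ π (f i) < π (f j)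

/-- `π` avoids the pattern `p`. -/
def Avoids {n k : ℕ} (π : Fin n → Fin n) (p : Fin k → ℕ) : Prop := ¬ Contains π p

/-- The set of permutations of `Fin n` avoiding the patterns 132, 2341 and 3241,
i.e. the 132-avoiding two-stack sortable permutations. -/
def TSS132 (n : ℕ) : Set (Fin n → Fin n) :=
  {π | Function.Bijective π ∧ Avoids π ![1,3,2] ∧ Avoids π ![2,3,4,1] ∧ Avoids π ![3,2,4,1]}

/-- The Pell numbers. -/
def pell : ℕ → ℕ
  | 0 => 0
  | 1 => 1
  | n+2 => 2 * pell (n+1) + pell n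

/-!
Sort the permutations by the position of their maximum. Avoiding 132, 2341 and 3241 puts the
maximum at position 0, 1 or last. In the first two cases the permutation is a skew sum `1 ⊖ σ`
or `12 ⊖ σ`: avoiding 132 forces the second-largest value into position 0 in the second case.
Putting a block of size at most 2 in front changes neither which of the three patterns occur
nor the number of 123s. With the maximum last, the 123s ending at the maximum are the ascents
of the rest, so exactly one 123 means that the rest has exactly one non-inversion. It is then
the reversal composed with an adjacent transposition, which gives `n + 1` permutations. Hence
the count `g` satisfies `g (n + 3) = g (n + 2) + g (n + 1) + (n + 1)`, solved by
`g n = F (n + 2) - n - 1`.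
-/

abbrev IncSubseq {n : ℕ} (π : Fin n → Fin n) (k : ℕ) : Type :=
  {f : Fin k → Fin n // StrictMono f ∧ StrictMono (π ∘ f)}

def TSS132One (n : ℕ) : Set (Fin n → Fin n) :=
  {π ∈ TSS132 n | Nat.card (IncSubseq π 3) = 1}

theorem Fin.val_le_apply_of_strictMono {m N : ℕ} {f : Fin m → Fin N} (hf : StrictMono f)
    (i : Fin m) : (i : ℕ) ≤ f i := by
  obtain ⟨i, hi⟩ := i
  induction i with
  | zero => exact Nat.zero_le _
  | succ i ih =>
    have h1 := ih (by omega)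
    have h2 := Fin.lt_def.1
      (hf (Fin.mk_lt_mk.2 i.lt_succ_self : (⟨i, by omega⟩ : Fin m) < ⟨i + 1, hi⟩))
    dsimp only at h1 ⊢
    omega

@[simp]
theorem Fin.castAdd_lt_castAdd_iff {n : ℕ} (k : ℕ) {a b : Fin n} :
    a.castAdd k < b.castAdd k ↔ a < b :=
  Fin.castLE_lt_castLE_iff _

section Patterns

variable {n : ℕ} {π : Fin n → Fin n}

theorem contains_of_strictMono {k : ℕ} {p : Fin k → ℕ} (hp : Function.Injective p)
    {f : Fin k → Fin n} (hf : StrictMono f) (h : ∀ i j, p i < p j → π (f i) < π (f j)) :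
    Contains π p := by
  refine ⟨f, hf, fun i j => ⟨h i j, fun hlt => ?_⟩⟩
  rcases lt_trichotomy (p i) (p j) with hij | hij | hij
  · exact hij
  · exact absurd (hlt.trans_eq (congrArg (π ∘ f) (hp hij).symm)) (lt_irrefl _)
  · exact absurd (h j i hij) hlt.asymm

theorem contains_132 {a b c : Fin n} (hab : a < b) (hbc : b < c)
    (hac : π a < π c) (hcb : π c < π b) : Contains π ![1, 3, 2] :=
  contains_of_strictMono (by decide) (f := ![a, b, c])
    (by simp [Fin.strictMono_iff_lt_succ, Fin.forall_fin_two, hab, hbc])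
    (by intro i j; fin_cases i <;> fin_cases j <;> simp [hac, hcb, hac.trans hcb])

theorem contains_2341 {a b c d : Fin n} (hab : a < b) (hbc : b < c) (hcd : c < d)
    (hda : π d < π a) (hab' : π a < π b) (hbc' : π b < π c) : Contains π ![2, 3, 4, 1] :=
  contains_of_strictMono (by decide) (f := ![a, b, c, d])
    (by simp [Fin.strictMono_iff_lt_succ, Fin.forall_fin_succ, hab, hbc, hcd])
    (by
      intro i j
      fin_cases i <;> fin_cases j <;>
        simp [hda, hab', hbc', hab'.trans hbc', hda.trans hab', (hda.trans hab').trans hbc'])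

theorem contains_3241 {a b c d : Fin n} (hab : a < b) (hbc : b < c) (hcd : c < d)
    (hdb : π d < π b) (hba : π b < π a) (hac : π a < π c) : Contains π ![3, 2, 4, 1] :=
  contains_of_strictMono (by decide) (f := ![a, b, c, d])
    (by simp [Fin.strictMono_iff_lt_succ, Fin.forall_fin_succ, hab, hbc, hcd])
    (by
      intro i j
      fin_cases i <;> fin_cases j <;>
        simp [hdb, hba, hac, hba.trans hac, hdb.trans hba, (hdb.trans hba).trans hac])

end Patterns

section SkewSum

variable {k n : ℕ}

/-- The skew sum `α ⊖ σ`. -/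
def skewSum (α : Fin k → Fin k) (σ : Fin n → Fin n) : Fin (n + k) → Fin (n + k) :=
  fun x => if h : (x : ℕ) < k then (α ⟨x, h⟩).natAdd n
    else (σ (x.subNat k (not_lt.1 h))).castAdd k

variable (α : Fin k → Fin k) (σ : Fin n → Fin n)

theorem skewSum_of_lt {x : Fin (n + k)} (hx : (x : ℕ) < k) :
    skewSum α σ x = (α ⟨x, hx⟩).natAdd n :=
  dif_pos hx

@[simp]
theorem skewSum_addNat (y : Fin n) : skewSum α σ (y.addNat k) = (σ y).castAdd k := by
  simp [skewSum]

theorem le_skewSum_iff {x : Fin (n + k)} : n ≤ (skewSum α σ x : ℕ) ↔ (x : ℕ) < k := by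
  unfold skewSum
  split_ifs with h <;> simp [h]

theorem exists_addNat_eq_of_le {m : ℕ} {f : Fin m → Fin (n + k)} (hf : StrictMono f)
    (h : ∀ i, k ≤ (f i : ℕ)) :
    ∃ g : Fin m → Fin n, StrictMono g ∧ f = fun i => (g i).addNat k := by
  refine ⟨fun i => (f i).subNat k (h i), fun a b hab => ?_,
    funext fun i => (Fin.addNat_subNat (h i)).symm⟩
  have := Fin.lt_def.1 (hf hab)
  have := h a
  rw [Fin.lt_def, Fin.val_subNat, Fin.val_subNat]
  omega

variable {α σ}

theorem exists_addNat_eq_of_skewSum_lt {m : ℕ} {f : Fin (m + 1) → Fin (n + k)}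
    (hf : StrictMono f) {j : Fin (m + 1)} (hj : k ≤ (j : ℕ))
    (h : skewSum α σ (f 0) < skewSum α σ (f j)) :
    ∃ g : Fin (m + 1) → Fin n, StrictMono g ∧ f = fun i => (g i).addNat k := by
  -- the `α` block lies above the `σ` block, so starting there would keep `f j` there too
  have hf0 : k ≤ (f 0 : ℕ) := by
    by_contra! h0
    have hfj : (f j : ℕ) < k :=
      (le_skewSum_iff α σ).1 (((le_skewSum_iff α σ).2 h0).trans (Fin.lt_def.1 h).le)
    have := Fin.val_le_apply_of_strictMono hf j
    omega
  exact exists_addNat_eq_of_le hf fun i => hf0.trans (hf.monotone (Fin.zero_le i))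

theorem contains_skewSum_iff {m : ℕ} {p : Fin (m + 1) → ℕ} {j : Fin (m + 1)}
    (hj : k ≤ (j : ℕ)) (hp : p 0 < p j) : Contains (skewSum α σ) p ↔ Contains σ p := by
  constructor
  · rintro ⟨f, hf, hfp⟩
    obtain ⟨g, hg, rfl⟩ := exists_addNat_eq_of_skewSum_lt hf hj ((hfp 0 j).1 hp)
    exact ⟨g, hg, fun a b => by simpa using hfp a b⟩
  · rintro ⟨g, hg, hgp⟩
    exact ⟨fun i => (g i).addNat k, fun a b hab => by simpa using hg hab,
      fun a b => by simpa using hgp a b⟩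

theorem card_incSubseq_skewSum {m : ℕ} (hk : k ≤ m + 1) :
    Nat.card (IncSubseq (skewSum α σ) (m + 2)) = Nat.card (IncSubseq σ (m + 2)) := by
  refine (Nat.card_congr (Equiv.ofBijective
    (fun g => ⟨fun i => (g.1 i).addNat k, fun a b hab => by simpa using g.2.1 hab,
      fun a b hab => by simpa using g.2.2 hab⟩) ⟨fun g g' h => ?_, ?_⟩)).symm
  · ext i : 2
    simpa using congrFun (congrArg Subtype.val h) i
  · rintro ⟨f, hf, hπf⟩
    obtain ⟨g, hg, rfl⟩ :=
      exists_addNat_eq_of_skewSum_lt hf (j := Fin.last (m + 1)) hk (hπf Fin.last_pos)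
    exact ⟨⟨g, hg, fun a b hab => by simpa using hπf hab⟩, rfl⟩

theorem injective_skewSum_iff (hα : Function.Injective α) :
    Function.Injective (skewSum α σ) ↔ Function.Injective σ := by
  refine ⟨fun h x y hxy => by simpa using @h (x.addNat k) (y.addNat k) (by simp [hxy]),
    fun hσ x y hxy => ?_⟩
  have hk : (x : ℕ) < k ↔ (y : ℕ) < k := by
    rw [← le_skewSum_iff α σ, ← le_skewSum_iff α σ, hxy]
  by_cases hx : (x : ℕ) < k
  · rw [skewSum_of_lt α σ hx, skewSum_of_lt α σ (hk.1 hx), Fin.natAdd_inj] at hxy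
    simpa [Fin.ext_iff] using hα hxy
  · rw [← Fin.addNat_subNat (not_lt.1 hx), ← Fin.addNat_subNat (not_lt.1 (mt hk.2 hx))]
      at hxy ⊢
    rw [skewSum_addNat, skewSum_addNat] at hxy
    rw [hσ (Fin.castAdd_injective _ _ hxy)]

variable (α) in
theorem skewSum_right_injective : Function.Injective (skewSum (n := n) α) := fun σ σ' h =>
  funext fun y => Fin.castAdd_injective n k (by simpa using congrFun h (y.addNat k))

theorem skewSum_eq_of_head_of_tail {π : Fin (n + k) → Fin (n + k)}
    (hhead : ∀ (x : Fin (n + k)) (hx : (x : ℕ) < k), π x = (α ⟨x, hx⟩).natAdd n)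
    (htail : ∀ y : Fin n, (π (y.addNat k) : ℕ) < n) :
    skewSum α (fun y => ⟨π (y.addNat k), htail y⟩) = π := by
  funext x
  by_cases hx : (x : ℕ) < k
  · rw [skewSum_of_lt _ _ hx, hhead x hx]
  · rw [← Fin.addNat_subNat (not_lt.1 hx), skewSum_addNat]
    rfl

theorem skewSum_mem_TSS132One_iff (hα : Function.Bijective α) (hk : k ≤ 2) :
    skewSum α σ ∈ TSS132One (n + k) ↔ σ ∈ TSS132One n := by
  simp only [TSS132One, TSS132, Avoids, Set.mem_ofPred_eq,
    ← Finite.injective_iff_bijective, injective_skewSum_iff hα.injective,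
    card_incSubseq_skewSum (m := 1) hk,
    contains_skewSum_iff (p := ![1, 3, 2]) (j := 2) hk (by decide),
    contains_skewSum_iff (p := ![2, 3, 4, 1]) (j := 2) hk (by decide),
    contains_skewSum_iff (p := ![3, 2, 4, 1]) (j := 2) hk (by decide)]

theorem setOf_mem_TSS132One_head_eq_image (hα : Function.Bijective α) (hk : k ≤ 2) :
    {π ∈ TSS132One (n + k) |
        ∀ (x : Fin (n + k)) (hx : (x : ℕ) < k), π x = (α ⟨x, hx⟩).natAdd n} =
      skewSum α '' TSS132One n := by
  ext π
  constructor
  · rintro ⟨hπ, hhead⟩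
    -- `α` is onto, so the head already takes every value `≥ n`
    have htail : ∀ y : Fin n, (π (y.addNat k) : ℕ) < n := by
      intro y
      by_contra! hy
      obtain ⟨i, hi⟩ := hα.2 ⟨π (y.addNat k) - n, by omega⟩
      have hxy : π ⟨i, by omega⟩ = π (y.addNat k) := by
        rw [hhead _ i.isLt]
        ext
        simp [hi]
        omega
      have := congrArg Fin.val (hπ.1.1.injective hxy)
      simp at this
      omega
    refine ⟨_, ?_, skewSum_eq_of_head_of_tail hhead htail⟩
    rw [← skewSum_mem_TSS132One_iff hα hk, skewSum_eq_of_head_of_tail hhead htail]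
    exact hπ
  · rintro ⟨σ, hσ, rfl⟩
    exact ⟨(skewSum_mem_TSS132One_iff hα hk).2 hσ, fun x hx => skewSum_of_lt α σ hx⟩

end SkewSum

namespace IncSubseq

variable {n : ℕ} {π : Fin n → Fin n}

def pair {x y : Fin n} (hxy : x < y) (hπ : π x < π y) : IncSubseq π 2 :=
  ⟨![x, y], by simp [Fin.strictMono_iff_lt_succ, hxy],
    by simp [Fin.strictMono_iff_lt_succ, hπ]⟩

theorem eq_of_subsingleton [Subsingleton (IncSubseq π 2)] {x y x' y' : Fin n} (hxy : x < y)
    (hπ : π x < π y) (hxy' : x' < y') (hπ' : π x' < π y') : x = x' ∧ y = y' := by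
  have h := Subsingleton.elim (pair hxy hπ) (pair hxy' hπ')
  exact ⟨congrArg (·.1 0) h, congrArg (·.1 1) h⟩

theorem nonempty_of_succ {k : ℕ} (h : Nonempty (IncSubseq π (k + 1))) :
    Nonempty (IncSubseq π k) :=
  let ⟨f, hf, hπf⟩ := h
  ⟨f ∘ Fin.castSucc, hf.comp Fin.strictMono_castSucc, hπf.comp Fin.strictMono_castSucc⟩

theorem isEmpty_three [Subsingleton (IncSubseq π 2)] : IsEmpty (IncSubseq π 3) :=
  ⟨fun ⟨f, hf, hπf⟩ => by
    have h01 : (0 : Fin 3) < 1 := by decide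
    have h12 : (1 : Fin 3) < 2 := by decide
    exact (hf h01).ne (eq_of_subsingleton (hf h01) (hπf h01) (hf h12) (hπf h12)).1⟩

end IncSubseq

section AppendMax

variable {k m : ℕ}

def appendMax (g : Fin k → Fin m) : Fin (k + 1) → Fin (m + 1) :=
  Fin.snoc (Fin.castSucc ∘ g) (Fin.last m)

@[simp]
theorem appendMax_castSucc (g : Fin k → Fin m) (i : Fin k) :
    appendMax g i.castSucc = (g i).castSucc :=
  Fin.snoc_castSucc ..

@[simp]
theorem appendMax_last (g : Fin k → Fin m) : appendMax g (Fin.last k) = Fin.last m :=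
  Fin.snoc_last ..

theorem appendMax_comp {l : ℕ} (τ : Fin m → Fin l) (g : Fin k → Fin m) :
    appendMax τ ∘ appendMax g = appendMax (τ ∘ g) := by
  funext i
  induction i using Fin.lastCases <;> simp

theorem appendMax_castPred_eq {f : Fin (k + 1) → Fin (m + 1)}
    (hlast : f (Fin.last k) = Fin.last m) (hne : ∀ i, f i.castSucc ≠ Fin.last m) :
    appendMax (fun i => (f i.castSucc).castPred (hne i)) = f := by
  funext i
  induction i using Fin.lastCases <;> simp [hlast]

theorem appendMax_injective : Function.Injective (appendMax : (Fin k → Fin m) → _) :=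
  fun _ _ h => funext fun i => Fin.castSucc_injective _ (by simpa using congrFun h i.castSucc)

theorem injective_appendMax_iff {g : Fin k → Fin m} :
    Function.Injective (appendMax g) ↔ Function.Injective g := by
  refine ⟨fun h x y hxy => Fin.castSucc_injective _ (h (by simp [hxy])), fun h x y hxy => ?_⟩
  induction x using Fin.lastCases <;> induction y using Fin.lastCases <;>
    simp_all [Fin.castSucc_ne_last, (Fin.castSucc_ne_last _).symm, h.eq_iff]

theorem strictMono_appendMax_iff {g : Fin k → Fin m} :
    StrictMono (appendMax g) ↔ StrictMono g := by
  refine ⟨fun h x y hxy => by simpa using h (Fin.castSucc_lt_castSucc_iff.2 hxy),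
    fun h x y hxy => ?_⟩
  induction x using Fin.lastCases <;> induction y using Fin.lastCases <;>
    simp_all [Fin.castSucc_lt_last, h.lt_iff_lt, not_lt.2 (Fin.le_last _)]

theorem card_incSubseq_appendMax (τ : Fin m → Fin m) (k : ℕ) :
    Nat.card (IncSubseq (appendMax τ) (k + 1)) =
      Nat.card (IncSubseq τ (k + 1)) + Nat.card (IncSubseq τ k) := by
  have hcomp : ∀ {l} (g : Fin l → Fin m),
      appendMax τ ∘ Fin.castSucc ∘ g = Fin.castSucc ∘ τ ∘ g :=
    fun g => funext fun i => by simp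
  have hcast : ∀ {l} {g : Fin l → Fin m}, StrictMono (Fin.castSucc ∘ g) ↔ StrictMono g :=
    ⟨fun h _ _ hab => Fin.castSucc_lt_castSucc_iff.1 (h hab), Fin.strictMono_castSucc.comp⟩
  let e : IncSubseq τ (k + 1) ⊕ IncSubseq τ k → IncSubseq (appendMax τ) (k + 1) :=
    Sum.elim
      (fun g => ⟨Fin.castSucc ∘ g.1, hcast.2 g.2.1, by rw [hcomp]; exact hcast.2 g.2.2⟩)
      (fun g => ⟨appendMax g.1, strictMono_appendMax_iff.2 g.2.1,
        by rw [appendMax_comp]; exact strictMono_appendMax_iff.2 g.2.2⟩)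
  rw [← Nat.card_sum]
  refine (Nat.card_congr (Equiv.ofBijective e ⟨?_, ?_⟩)).symm
  · rintro (g | g) (g' | g') h <;> have h := congrArg Subtype.val h
    · exact congrArg Sum.inl (Subtype.ext (funext fun i =>
        Fin.castSucc_injective _ (congrFun h i)))
    · simpa [e, Fin.castSucc_ne_last] using congrFun h (Fin.last k)
    · simpa [e, Fin.castSucc_ne_last] using (congrFun h (Fin.last k)).symm
    · exact congrArg Sum.inr (Subtype.ext (funext fun i => by
        simpa [e] using congrFun h i.castSucc))
  · rintro ⟨f, hf, hπf⟩
    by_cases hlast : f (Fin.last k) = Fin.last m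
    · have hne : ∀ i : Fin k, f i.castSucc ≠ Fin.last m := fun i =>
        ((hf (Fin.castSucc_lt_last i)).trans_eq hlast).ne
      have hf_eq := appendMax_castPred_eq hlast hne
      rw [← hf_eq, appendMax_comp] at hπf
      rw [← hf_eq] at hf
      exact ⟨Sum.inr ⟨_, strictMono_appendMax_iff.1 hf, strictMono_appendMax_iff.1 hπf⟩,
        Subtype.ext hf_eq⟩
    · have hne : ∀ i, f i ≠ Fin.last m := fun i =>
        ((hf.monotone (Fin.le_last i)).trans_lt (Fin.lt_last_iff_ne_last.2 hlast)).ne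
      have hf_eq : Fin.castSucc ∘ (fun i => (f i).castPred (hne i)) = f :=
        funext fun i => Fin.castSucc_castPred _ _
      rw [← hf_eq, hcomp] at hπf
      rw [← hf_eq] at hf
      exact ⟨Sum.inl ⟨_, hcast.1 hf, hcast.1 hπf⟩, Subtype.ext hf_eq⟩

theorem card_incSubseq_appendMax_three_eq_one_iff {τ : Fin m → Fin m} :
    Nat.card (IncSubseq (appendMax τ) 3) = 1 ↔ Nat.card (IncSubseq τ 2) = 1 := by
  have hcard : Nat.card (IncSubseq (appendMax τ) 3) =
      Nat.card (IncSubseq τ 3) + Nat.card (IncSubseq τ 2) :=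
    card_incSubseq_appendMax τ 2
  rw [hcard]
  constructor
  · intro h
    by_contra h2
    have h3 : Nonempty (IncSubseq τ 3) :=
      ((Nat.card_pos_iff (α := IncSubseq τ 3)).1 (by omega)).1
    have := IncSubseq.nonempty_of_succ h3
    have := Nat.card_pos (α := IncSubseq τ 2)
    omega
  · intro h
    have := (Nat.card_eq_one_iff_unique.1 h).1
    have := IncSubseq.isEmpty_three (π := τ)
    rw [h, Nat.card_of_isEmpty]

/-- The conditions on `b` and `d` keep them off the final maximum, so an occurrence of `p` would
give two distinct ascents of `τ`. -/
theorem not_contains_appendMax {l : ℕ} {τ : Fin m → Fin m} [Subsingleton (IncSubseq τ 2)]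
    {p : Fin l → ℕ} {a b c d : Fin l} (hab : a < b) (hcd : c < d) (hpab : p a < p b)
    (hpcd : p c < p d) (hne : a ≠ c ∨ b ≠ d) (hb : ∃ e, b < e ∨ p b < p e)
    (hd : ∃ e, d < e ∨ p d < p e) : ¬ Contains (appendMax τ) p := by
  rintro ⟨f, hf, hfp⟩
  have lower : ∀ i j, i < j → p i < p j → (∃ e, j < e ∨ p j < p e) →
      ∃ x y : Fin m, x < y ∧ τ x < τ y ∧ f i = x.castSucc ∧ f j = y.castSucc := by
    rintro i j hij hpij ⟨e, he⟩
    have hj : f j ≠ Fin.last m := by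
      rcases he with he | he
      · exact Fin.ne_last_of_lt (hf he)
      · intro hj
        have := (hfp j e).1 he
        rw [hj, appendMax_last] at this
        exact this.not_ge (Fin.le_last _)
    obtain ⟨y, hy⟩ := Fin.exists_castSucc_eq.2 hj
    obtain ⟨x, hx⟩ := Fin.exists_castSucc_eq.2 (Fin.ne_last_of_lt (hf hij))
    have hτ := (hfp i j).1 hpij
    rw [← hx, ← hy, appendMax_castSucc, appendMax_castSucc] at hτ
    have hxy := hf hij
    rw [← hx, ← hy] at hxy
    exact ⟨x, y, Fin.castSucc_lt_castSucc_iff.1 hxy, Fin.castSucc_lt_castSucc_iff.1 hτ,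
      hx.symm, hy.symm⟩
  obtain ⟨x, y, hxy, hτxy, hx, hy⟩ := lower a b hab hpab hb
  obtain ⟨x', y', hxy', hτxy', hx', hy'⟩ := lower c d hcd hpcd hd
  obtain ⟨rfl, rfl⟩ := IncSubseq.eq_of_subsingleton hxy hτxy hxy' hτxy'
  exact hne.elim (fun h => h (hf.injective (hx.trans hx'.symm)))
    (fun h => h (hf.injective (hy.trans hy'.symm)))

end AppendMax

section RevSwap

variable {m : ℕ}

theorem Equiv.swap_castSucc_succ_lt {j : Fin m} {x y : Fin (m + 1)} (hxy : x < y)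
    (hne : ¬(x = j.castSucc ∧ y = j.succ)) :
    Equiv.swap j.castSucc j.succ x < Equiv.swap j.castSucc j.succ y := by
  rw [Equiv.swap_apply_def, Equiv.swap_apply_def]
  rw [Fin.lt_def] at hxy
  simp only [Fin.ext_iff, Fin.val_castSucc, Fin.val_succ] at hne
  split_ifs <;>
    simp only [Fin.lt_def, Fin.ext_iff, Fin.val_castSucc, Fin.val_succ] at * <;> omega

def revSwap (j : Fin m) : Fin (m + 1) → Fin (m + 1) :=
  Fin.rev ∘ Equiv.swap j.castSucc j.succ

theorem revSwap_lt_revSwap_iff {j : Fin m} {x y : Fin (m + 1)} (hxy : x < y) :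
    revSwap j x < revSwap j y ↔ x = j.castSucc ∧ y = j.succ := by
  refine ⟨fun h => ?_, ?_⟩
  · by_contra hne
    simp only [revSwap, Function.comp_apply, Fin.rev_lt_rev] at h
    exact h.not_gt (Equiv.swap_castSucc_succ_lt hxy hne)
  · rintro ⟨rfl, rfl⟩
    simp [revSwap]

theorem revSwap_apply_injective (j : Fin m) : Function.Injective (revSwap j) :=
  Fin.rev_injective.comp (Equiv.injective _)

theorem revSwap_injective : Function.Injective (revSwap (m := m)) := fun _ _ h =>
  Fin.castSucc_injective _ ((revSwap_lt_revSwap_iff Fin.castSucc_lt_succ).1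
    (h ▸ (revSwap_lt_revSwap_iff Fin.castSucc_lt_succ).2 ⟨rfl, rfl⟩)).1.symm

theorem card_incSubseq_revSwap (j : Fin m) : Nat.card (IncSubseq (revSwap j) 2) = 1 := by
  have hpair : ∀ g : IncSubseq (revSwap j) 2, g.1 0 = j.castSucc ∧ g.1 1 = j.succ :=
    fun g => (revSwap_lt_revSwap_iff (g.2.1 Fin.zero_lt_one)).1 (g.2.2 Fin.zero_lt_one)
  refine Nat.card_eq_one_iff_unique.2 ⟨⟨fun g g' => Subtype.ext (funext fun i => ?_)⟩,
    ⟨IncSubseq.pair Fin.castSucc_lt_succ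
      ((revSwap_lt_revSwap_iff Fin.castSucc_lt_succ).2 ⟨rfl, rfl⟩)⟩⟩
  fin_cases i
  · exact (hpair g).1.trans (hpair g').1.symm
  · exact (hpair g).2.trans (hpair g').2.symm

theorem exists_eq_revSwap {τ : Fin (m + 1) → Fin (m + 1)} (hτ : Function.Injective τ)
    (h : Nat.card (IncSubseq τ 2) = 1) : ∃ j : Fin m, τ = revSwap j := by
  obtain ⟨hsub, ⟨g⟩⟩ := Nat.card_eq_one_iff_unique.1 h
  set p := g.1 0
  set q := g.1 1
  have hpq : p < q := g.2.1 Fin.zero_lt_one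
  have hτpq : τ p < τ q := g.2.2 Fin.zero_lt_one
  have hdesc : ∀ x y, x < y → ¬(x = p ∧ y = q) → τ y < τ x := fun x y hxy hne =>
    (lt_or_gt_of_ne (hτ.ne hxy.ne)).resolve_left
      fun h => hne (IncSubseq.eq_of_subsingleton hxy h hpq hτpq)
  -- an entry strictly between `p` and `q` would form a second ascent with one of them
  have hadj : (q : ℕ) = p + 1 := by
    by_contra hne
    have hq := q.isLt
    let r : Fin (m + 1) := ⟨p + 1, by have := Fin.lt_def.1 hpq; omega⟩
    have hpr : p < r := Fin.lt_def.2 (Nat.lt_succ_self _)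
    have hrq : r < q := Fin.lt_def.2 (by have := Fin.lt_def.1 hpq; simp only [r]; omega)
    exact lt_irrefl _ (hτpq.trans ((hdesc r q hrq fun h => hpr.ne' h.1).trans
      (hdesc p r hpr fun h => hrq.ne h.2)))
  set j := p.castPred (Fin.ne_last_of_lt hpq)
  have hjp : j.castSucc = p := Fin.castSucc_castPred _ _
  have hjq : j.succ = q := Fin.ext (by simp [j, hadj])
  refine ⟨j, ?_⟩
  have hanti : StrictMono (Fin.rev ∘ τ ∘ Equiv.swap j.castSucc j.succ) := by
    intro x y hxy
    simp only [Function.comp_apply, Fin.rev_lt_rev]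
    by_cases hxy' : x = j.castSucc ∧ y = j.succ
    · obtain ⟨rfl, rfl⟩ := hxy'
      simpa [hjp, hjq] using hτpq
    · refine hdesc _ _ (Equiv.swap_castSucc_succ_lt hxy hxy') fun h => ?_
      rw [← hjp, ← hjq, Equiv.swap_apply_eq_iff, Equiv.swap_apply_eq_iff,
        Equiv.swap_apply_left, Equiv.swap_apply_right] at h
      exact (h.1 ▸ h.2 ▸ hxy).not_gt Fin.castSucc_lt_succ
  funext x
  have := congrFun hanti.eq_id (Equiv.swap j.castSucc j.succ x)
  simp only [Function.comp_apply, Equiv.swap_apply_self, id] at this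
  simp [revSwap, ← this]

end RevSwap

namespace TSS132

/-- Entries before the maximum exceed every later entry (else 132), so two of them, the maximum
and a later entry form 2341 or 3241. -/
theorem position_max_lt_two {N : ℕ} {π : Fin N → Fin N} (hπ : π ∈ TSS132 N) {k l : Fin N}
    (hkl : k < l) (hmax : ∀ x, π x ≤ π k) : (k : ℕ) < 2 := by
  by_contra! hk
  have hinj := hπ.1.1
  have hlt_max : ∀ {x}, x ≠ k → π x < π k := fun hx => (hmax _).lt_of_ne (hinj.ne hx)
  have hlk : π l < π k := hlt_max hkl.ne'
  have hbefore : ∀ x, x < k → π l < π x := fun x hx =>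
    (lt_or_gt_of_ne (hinj.ne (hx.trans hkl).ne)).resolve_left
      fun hxl => hπ.2.1 (contains_132 hx hkl hxl hlk)
  let z : Fin N := ⟨0, by omega⟩
  let o : Fin N := ⟨1, by omega⟩
  have hzo : z < o := Fin.lt_def.2 Nat.zero_lt_one
  have hok : o < k := Fin.lt_def.2 (by simp only [o]; omega)
  rcases lt_or_gt_of_ne (hinj.ne hzo.ne) with h | h
  · exact hπ.2.2.1 (contains_2341 hzo hok hkl (hbefore z (hzo.trans hok)) h (hlt_max hok.ne))
  · exact hπ.2.2.2 (contains_3241 hzo hok hkl (hbefore o hok) h (hlt_max (hzo.trans hok).ne))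

variable {n : ℕ} {π : Fin (n + 3) → Fin (n + 3)}

theorem max_at_zero_or_one_or_last (hπ : π ∈ TSS132 (n + 3)) :
    π 0 = Fin.last (n + 2) ∨ π 1 = Fin.last (n + 2) ∨
      π (Fin.last (n + 2)) = Fin.last (n + 2) := by
  obtain ⟨k, hk⟩ := hπ.1.2 (Fin.last (n + 2))
  by_cases hlast : k = Fin.last (n + 2)
  · exact .inr (.inr (hlast ▸ hk))
  have := position_max_lt_two hπ (Fin.lt_last_iff_ne_last.2 hlast)
    (fun x => hk ▸ Fin.le_last _)
  rcases (show k = 0 ∨ k = 1 by simp only [Fin.ext_iff, Fin.val_zero, Fin.val_one]; omega)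
    with rfl | rfl
  · exact .inl hk
  · exact .inr (.inl hk)

theorem apply_zero_of_apply_one (hπ : π ∈ TSS132 (n + 3)) (h1 : π 1 = Fin.last (n + 2)) :
    π 0 = ⟨n + 1, by omega⟩ := by
  by_contra h0
  obtain ⟨r, hr⟩ := hπ.1.2 ⟨n + 1, by omega⟩
  have hr0 : r ≠ 0 := by rintro rfl; exact h0 hr
  have hr1 : r ≠ 1 := by rintro rfl; simp [h1, Fin.ext_iff] at hr
  have h1r : (1 : Fin (n + 3)) < r := by
    simp only [Fin.lt_def, ne_eq, Fin.ext_iff, Fin.val_zero, Fin.val_one] at hr0 hr1 ⊢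
    omega
  have h01 : π 0 ≠ π 1 := hπ.1.1.ne (by simp)
  refine hπ.2.1 (contains_132 (by simp : (0 : Fin (n + 3)) < 1) h1r ?_ ?_)
  · rw [h1] at h01
    have := (π 0).isLt
    simp only [hr, Fin.lt_def, ne_eq, Fin.ext_iff, Fin.val_last] at h0 h01 ⊢
    omega
  · simp [hr, h1, Fin.lt_def]

end TSS132

theorem appendMax_revSwap_mem_TSS132One {m : ℕ} (j : Fin m) :
    appendMax (revSwap j) ∈ TSS132One (m + 2) := by
  have hcard := card_incSubseq_revSwap j
  have : Subsingleton (IncSubseq (revSwap j) 2) := (Nat.card_eq_one_iff_unique.1 hcard).1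
  refine ⟨⟨Finite.injective_iff_bijective.1
    (injective_appendMax_iff.2 (revSwap_apply_injective j)), ?_, ?_, ?_⟩,
    card_incSubseq_appendMax_three_eq_one_iff.2 hcard⟩
  · exact not_contains_appendMax (a := 0) (b := 1) (c := 0) (d := 2)
      (by decide) (by decide) (by decide) (by decide) (by decide)
      ⟨2, by decide⟩ ⟨1, by decide⟩
  · exact not_contains_appendMax (a := 0) (b := 1) (c := 1) (d := 2)
      (by decide) (by decide) (by decide) (by decide) (by decide)
      ⟨2, by decide⟩ ⟨3, by decide⟩
  · exact not_contains_appendMax (a := 0) (b := 2) (c := 1) (d := 2)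
      (by decide) (by decide) (by decide) (by decide) (by decide)
      ⟨3, by decide⟩ ⟨3, by decide⟩

theorem ncard_TSS132One_max_first (n : ℕ) :
    {π ∈ TSS132One (n + 3) | π 0 = Fin.last (n + 2)}.ncard = (TSS132One (n + 2)).ncard := by
  have hset : {π ∈ TSS132One (n + 3) | π 0 = Fin.last (n + 2)} =
      {π ∈ TSS132One (n + 2 + 1) | ∀ (x : Fin (n + 2 + 1)) (hx : (x : ℕ) < 1),
        π x = (id ⟨x, hx⟩ : Fin 1).natAdd (n + 2)} := by
    refine Set.ext fun π => and_congr_right fun _ =>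
      ⟨fun h x hx => ?_, fun h => h 0 Nat.zero_lt_one⟩
    obtain rfl : x = 0 := Fin.ext (Nat.lt_one_iff.1 hx)
    exact h
  rw [hset, setOf_mem_TSS132One_head_eq_image Function.bijective_id (by norm_num),
    Set.ncard_image_of_injective _ (skewSum_right_injective _)]

theorem ncard_TSS132One_max_second (n : ℕ) :
    {π ∈ TSS132One (n + 3) | π 1 = Fin.last (n + 2)}.ncard = (TSS132One (n + 1)).ncard := by
  have hset : {π ∈ TSS132One (n + 3) | π 1 = Fin.last (n + 2)} =
      {π ∈ TSS132One (n + 1 + 2) | ∀ (x : Fin (n + 1 + 2)) (hx : (x : ℕ) < 2),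
        π x = (id ⟨x, hx⟩ : Fin 2).natAdd (n + 1)} := by
    refine Set.ext fun π => and_congr_right fun hπ =>
      ⟨fun h x hx => ?_, fun h => h 1 Nat.one_lt_two⟩
    rcases (show x = 0 ∨ x = 1 by simp only [Fin.ext_iff, Fin.val_zero, Fin.val_one]; omega)
      with rfl | rfl
    · exact (TSS132.apply_zero_of_apply_one hπ.1 h).trans (Fin.ext (by simp))
    · exact h.trans (Fin.ext (by simp))
  rw [hset, setOf_mem_TSS132One_head_eq_image Function.bijective_id le_rfl,
    Set.ncard_image_of_injective _ (skewSum_right_injective _)]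

theorem ncard_TSS132One_max_last (m : ℕ) :
    {π ∈ TSS132One (m + 2) | π (Fin.last (m + 1)) = Fin.last (m + 1)}.ncard = m := by
  have hset : {π ∈ TSS132One (m + 2) | π (Fin.last (m + 1)) = Fin.last (m + 1)} =
      Set.range (appendMax ∘ revSwap (m := m)) := by
    ext π
    refine ⟨fun ⟨hπ, hlast⟩ => ?_, ?_⟩
    · have hne : ∀ i : Fin (m + 1), π i.castSucc ≠ Fin.last (m + 1) := fun i h =>
        Fin.castSucc_ne_last i (hπ.1.1.1 (h.trans hlast.symm))
      have hτ := appendMax_castPred_eq hlast hne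
      rw [← hτ] at hπ ⊢
      obtain ⟨j, hj⟩ := exists_eq_revSwap (injective_appendMax_iff.1 hπ.1.1.1)
        (card_incSubseq_appendMax_three_eq_one_iff.1 hπ.2)
      exact ⟨j, hj ▸ rfl⟩
    · rintro ⟨j, rfl⟩
      exact ⟨appendMax_revSwap_mem_TSS132One j, appendMax_last _⟩
  rw [hset, Set.ncard_range_of_injective (appendMax_injective.comp revSwap_injective),
    Nat.card_eq_fintype_card, Fintype.card_fin]

theorem TSS132One_eq_empty {n : ℕ} (hn : n < 3) : TSS132One n = ∅ := by
  refine Set.eq_empty_of_forall_notMem fun π hπ => ?_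
  obtain ⟨⟨f, hf, -⟩⟩ := (Nat.card_eq_one_iff_unique.1 hπ.2).2
  have := Fintype.card_le_of_injective f hf.injective
  simp only [Fintype.card_fin] at this
  omega

theorem ncard_TSS132One_add_three (n : ℕ) :
    (TSS132One (n + 3)).ncard =
      (TSS132One (n + 2)).ncard + (TSS132One (n + 1)).ncard + (n + 1) := by
  let part (a : Fin (n + 3)) := {π ∈ TSS132One (n + 3) | π a = Fin.last (n + 2)}
  have hdisj : ∀ {a b}, a ≠ b → Disjoint (part a) (part b) := fun hab =>
    Set.disjoint_left.2 fun π ⟨hπ, ha⟩ ⟨_, hb⟩ => hab (hπ.1.1.1 (ha.trans hb.symm))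
  have hsplit : TSS132One (n + 3) = part 0 ∪ part 1 ∪ part (Fin.last (n + 2)) := by
    ext π
    refine ⟨fun hπ => ?_, fun h => by
      rcases h with (⟨h, -⟩ | ⟨h, -⟩) | ⟨h, -⟩ <;> exact h⟩
    rcases TSS132.max_at_zero_or_one_or_last hπ.1 with h | h | h
    exacts [.inl (.inl ⟨hπ, h⟩), .inl (.inr ⟨hπ, h⟩), .inr ⟨hπ, h⟩]
  rw [hsplit, Set.ncard_union_eq (Set.disjoint_union_left.2 ⟨hdisj ?_, hdisj ?_⟩),
    Set.ncard_union_eq (hdisj ?_), ncard_TSS132One_max_first, ncard_TSS132One_max_second,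
    ncard_TSS132One_max_last]
  all_goals simp [Fin.ext_iff]

theorem ncard_TSS132One_add_eq_fib : ∀ n, (TSS132One n).ncard + (n + 1) = Nat.fib (n + 2)
  | 0 | 1 | 2 => by simp [TSS132One_eq_empty, Nat.fib_add_two]
  | n + 3 => by
    have h1 : _ + (n + 3) = Nat.fib (n + 4) := ncard_TSS132One_add_eq_fib (n + 2)
    have h2 : _ + (n + 2) = Nat.fib (n + 3) := ncard_TSS132One_add_eq_fib (n + 1)
    have h3 : Nat.fib (n + 5) = Nat.fib (n + 3) + Nat.fib (n + 4) := Nat.fib_add_two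
    have := ncard_TSS132One_add_three n
    show _ + (n + 4) = Nat.fib (n + 5)
    omega

theorem stmt_18 (n : ℕ) :
    (Nat.card ↥{π ∈ TSS132 n |
        Nat.card {f : Fin 3 → Fin n // StrictMono f ∧ StrictMono (π ∘ f)} = 1} : ℤ) =
      Nat.fib (n+2) - n - 1 := by
  have h := ncard_TSS132One_add_eq_fib n
  rw [← Nat.card_coe_set_eq] at h
  change (Nat.card (TSS132One n) : ℤ) = _
  omega
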